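/- For any α > 0 there exists a function φ : (0,∞) → (0,∞) which is nondecreasing with t ↦ t^(−α)·φ(t) nonincreasing, such that for every 0 < β < α, every s ∈ ℝ, and every M ≥ 1, the function t ↦ t^s·φ(t) fails to satisfy both: (i) t^s·φ(t) is almost nondecreasing with constant M, and (ii) t^(−β)·t^s·φ(t) is almost nonincreasing with constant M. -/
import Mathlib

open Set

noncomputable def stmt2g (u : ℝ) : ℝ := (1 + Real.sin (Real.sqrt u)) / 2

noncomputable def stmt2f (x : ℝ) : ℝ := ∫ u in (0:ℝ)..x, stmt2g u

lemma stmt2g_cont : Continuous stmt2g := by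
  exact (continuous_const.add (Real.continuous_sin.comp Real.continuous_sqrt)).div_const 2

lemma stmt2g_nonneg (u : ℝ) : 0 ≤ stmt2g u := by
  have := Real.neg_one_le_sin (Real.sqrt u)
  unfold stmt2g; linarith

lemma stmt2g_le_one (u : ℝ) : stmt2g u ≤ 1 := by
  have := Real.sin_le_one (Real.sqrt u)
  unfold stmt2g; linarith

lemma stmt2f_diff (x y : ℝ) : stmt2f y - stmt2f x = ∫ u in x..y, stmt2g u := by
  have h1 : IntervalIntegrable stmt2g MeasureTheory.volume 0 x :=
    stmt2g_cont.intervalIntegrable _ _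
  have h2 : IntervalIntegrable stmt2g MeasureTheory.volume x y :=
    stmt2g_cont.intervalIntegrable _ _
  have := intervalIntegral.integral_add_adjacent_intervals h1 h2
  unfold stmt2f
  linarith

lemma stmt2f_mono {x y : ℝ} (h : x ≤ y) : stmt2f x ≤ stmt2f y := by
  have : 0 ≤ ∫ u in x..y, stmt2g u :=
    intervalIntegral.integral_nonneg h (fun u _ => stmt2g_nonneg u)
  have := stmt2f_diff x y
  linarith

lemma stmt2f_lip {x y : ℝ} (h : x ≤ y) : stmt2f y - stmt2f x ≤ y - x := by
  rw [stmt2f_diff]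
  calc ∫ u in x..y, stmt2g u ≤ ∫ _ in x..y, (1:ℝ) := by
        apply intervalIntegral.integral_mono_on h
          (stmt2g_cont.intervalIntegrable _ _)
          (intervalIntegrable_const)
        exact fun u _ => stmt2g_le_one u
    _ = y - x := by simp

lemma stmt2f_upper {x y b : ℝ} (h : x ≤ y) (hb : ∀ u ∈ Icc x y, stmt2g u ≤ b) :
    stmt2f y - stmt2f x ≤ (y - x) * b := by
  rw [stmt2f_diff]
  calc ∫ u in x..y, stmt2g u ≤ ∫ _ in x..y, b := by
        apply intervalIntegral.integral_mono_on h
          (stmt2g_cont.intervalIntegrable _ _) (intervalIntegrable_const) hb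
    _ = (y - x) * b := by simp [mul_comm]

lemma stmt2f_lower {x y b : ℝ} (h : x ≤ y) (hb : ∀ u ∈ Icc x y, b ≤ stmt2g u) :
    (y - x) * b ≤ stmt2f y - stmt2f x := by
  rw [stmt2f_diff]
  calc (y - x) * b = ∫ _ in x..y, b := by simp [mul_comm]
    _ ≤ ∫ u in x..y, stmt2g u := by
        apply intervalIntegral.integral_mono_on h (intervalIntegrable_const)
          (stmt2g_cont.intervalIntegrable _ _) hb

/-- On `[(c-ε)², (c+ε)²]` with `c = 2πk - π/2`, `g` is at most `ε²/4`. -/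
lemma stmt2g_small {k : ℕ} {ε u : ℝ} (hε : 0 < ε)
    (hc : ε ≤ 2 * Real.pi * k - Real.pi / 2)
    (hu : u ∈ Icc ((2 * Real.pi * k - Real.pi / 2 - ε)^2) ((2 * Real.pi * k - Real.pi / 2 + ε)^2)) :
    stmt2g u ≤ ε ^ 2 / 4 := by
  set c : ℝ := 2 * Real.pi * k - Real.pi / 2 with hcdef
  have hce : 0 ≤ c - ε := by linarith
  have hs1 : c - ε ≤ Real.sqrt u := by
    rw [show c - ε = Real.sqrt ((c - ε)^2) by rw [Real.sqrt_sq hce]]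
    exact Real.sqrt_le_sqrt hu.1
  have hs2 : Real.sqrt u ≤ c + ε := by
    rw [show c + ε = Real.sqrt ((c + ε)^2) by rw [Real.sqrt_sq (by linarith)]]
    exact Real.sqrt_le_sqrt hu.2
  set θ : ℝ := Real.sqrt u - c with hθdef
  have hθ : |θ| ≤ ε := abs_le.2 ⟨by simp [hθdef]; linarith, by simp [hθdef]; linarith⟩
  have hsin : Real.sin (Real.sqrt u) = -Real.cos θ := by
    have : Real.sqrt u = (θ - Real.pi / 2) + (k : ℝ) * (2 * Real.pi) := by
      simp [hθdef, hcdef]; ring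
    rw [this, Real.sin_add_nat_mul_two_pi, Real.sin_sub_pi_div_two]
  have hcos : 1 - θ ^ 2 / 2 ≤ Real.cos θ := Real.one_sub_sq_div_two_le_cos
  have hθ2 : θ ^ 2 ≤ ε ^ 2 := by
    have := sq_abs θ
    nlinarith [abs_nonneg θ]
  unfold stmt2g
  rw [hsin]
  nlinarith

/-- On `[(c-ε)², (c+ε)²]` with `c = 2πk + π/2`, `g` is at least `1 - ε²/4`. -/
lemma stmt2g_large {k : ℕ} {ε u : ℝ} (hε : 0 < ε)
    (hc : ε ≤ 2 * Real.pi * k + Real.pi / 2)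
    (hu : u ∈ Icc ((2 * Real.pi * k + Real.pi / 2 - ε)^2) ((2 * Real.pi * k + Real.pi / 2 + ε)^2)) :
    1 - ε ^ 2 / 4 ≤ stmt2g u := by
  set c : ℝ := 2 * Real.pi * k + Real.pi / 2 with hcdef
  have hce : 0 ≤ c - ε := by linarith
  have hs1 : c - ε ≤ Real.sqrt u := by
    rw [show c - ε = Real.sqrt ((c - ε)^2) by rw [Real.sqrt_sq hce]]
    exact Real.sqrt_le_sqrt hu.1
  have hs2 : Real.sqrt u ≤ c + ε := by
    rw [show c + ε = Real.sqrt ((c + ε)^2) by rw [Real.sqrt_sq (by linarith)]]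
    exact Real.sqrt_le_sqrt hu.2
  set θ : ℝ := Real.sqrt u - c with hθdef
  have hθ : |θ| ≤ ε := abs_le.2 ⟨by simp [hθdef]; linarith, by simp [hθdef]; linarith⟩
  have hsin : Real.sin (Real.sqrt u) = Real.cos θ := by
    have : Real.sqrt u = (θ + Real.pi / 2) + (k : ℝ) * (2 * Real.pi) := by
      simp [hθdef, hcdef]; ring
    rw [this, Real.sin_add_nat_mul_two_pi, Real.sin_add_pi_div_two]
  have hcos : 1 - θ ^ 2 / 2 ≤ Real.cos θ := Real.one_sub_sq_div_two_le_cos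
  have hθ2 : θ ^ 2 ≤ ε ^ 2 := by
    have := sq_abs θ
    nlinarith [abs_nonneg θ]
  unfold stmt2g
  rw [hsin]
  nlinarith

set_option maxHeartbeats 2000000 in
/-- Lemma 2.2 — for any `α > 0` there is `φ ∈ Φ^α` such that for every
`0 < β < α`, `s ∈ ℝ` and `M ≥ 1`, the function `t ↦ t^s·φ(t)` is not in `Φ̃^β(M)`. -/
theorem stmt2 (α : ℝ) (hα : 0 < α) :
    ∃ φ : ℝ → ℝ, (∀ t : ℝ, 0 < t → 0 < φ t) ∧
      (∀ t₁ t₂ : ℝ, 0 < t₁ → t₁ ≤ t₂ → φ t₁ ≤ φ t₂) ∧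
      (∀ t₁ t₂ : ℝ, 0 < t₁ → t₁ ≤ t₂ → t₂ ^ (-α) * φ t₂ ≤ t₁ ^ (-α) * φ t₁) ∧
      (∀ β s M : ℝ, 0 < β → β < α → 1 ≤ M →
        ¬ ((∀ t₁ t₂ : ℝ, 0 < t₁ → t₁ ≤ t₂ → t₁ ^ s * φ t₁ ≤ M * (t₂ ^ s * φ t₂)) ∧
           (∀ t₁ t₂ : ℝ, 0 < t₁ → t₁ ≤ t₂ →
              t₂ ^ (-β) * (t₂ ^ s * φ t₂) ≤ M * (t₁ ^ (-β) * (t₁ ^ s * φ t₁))))) := by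
  refine ⟨fun t => Real.exp (α * stmt2f (Real.log t)), fun t _ => Real.exp_pos _, ?_, ?_, ?_⟩
  · intro t₁ t₂ h1 h12
    exact Real.exp_le_exp.2 (by
      have := stmt2f_mono (Real.log_le_log h1 h12)
      nlinarith)
  · intro t₁ t₂ h1 h12
    have h2 : 0 < t₂ := lt_of_lt_of_le h1 h12
    rw [Real.rpow_def_of_pos h1, Real.rpow_def_of_pos h2, ← Real.exp_add, ← Real.exp_add]
    apply Real.exp_le_exp.2
    have hlip := stmt2f_lip (Real.log_le_log h1 h12)
    nlinarith
  · rintro β s M hβ hβα hM ⟨H1, H2⟩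
    have hM0 : (0:ℝ) < M := by linarith
    have hlogM : 0 ≤ Real.log M := Real.log_nonneg hM
    rcases lt_or_ge s 0 with hs | hs
    · -- use H1 on a near-flat interval
      set ε : ℝ := min 1 (Real.sqrt (-2 * s / α)) with hεdef
      have hε0 : 0 < ε := lt_min one_pos (Real.sqrt_pos.2 (div_pos (by linarith) hα))
      have hε1 : ε ≤ 1 := min_le_left _ _
      have hε2 : α * ε ^ 2 ≤ -2 * s := by
        have h1 : ε ^ 2 ≤ Real.sqrt (-2 * s / α) ^ 2 := by
          apply pow_le_pow_left₀ hε0.le (min_le_right _ _)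
        rw [Real.sq_sqrt (le_of_lt (div_pos (by linarith) hα))] at h1
        calc α * ε ^ 2 ≤ α * (-2 * s / α) := by nlinarith
          _ = -2 * s := by rw [mul_comm, div_mul_cancel₀ _ (ne_of_gt hα)]
      set T : ℝ := (Real.log M + 1) * (2 / (-s)) with hTdef
      obtain ⟨k, hk⟩ := exists_nat_ge (max 1 (T / (4 * ε)))
      have hk1 : (1:ℝ) ≤ k := le_trans (le_max_left _ _) hk
      have hkT : T / (4 * ε) ≤ k := le_trans (le_max_right _ _) hk
      have hπ : (3.14 : ℝ) < Real.pi := by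
        have := Real.pi_gt_d6; linarith
      set c : ℝ := 2 * Real.pi * k - Real.pi / 2 with hcdef
      have hπk : 2 * Real.pi * 1 ≤ 2 * Real.pi * k := by nlinarith
      have hcε : ε ≤ c := by rw [hcdef]; nlinarith
      set x : ℝ := (c - ε) ^ 2 with hxdef
      set y : ℝ := (c + ε) ^ 2 with hydef
      have hxy : x ≤ y := by nlinarith
      have hL : y - x = 4 * c * ε := by rw [hxdef, hydef]; ring
      have hTL : T ≤ y - x := by
        rw [hL]
        have hck : (k:ℝ) ≤ c := by rw [hcdef]; nlinarith [mul_le_mul_of_nonneg_right (by linarith : (1:ℝ) ≤ 2 * Real.pi - 1) (by linarith : (0:ℝ) ≤ (k:ℝ) - 1)]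
        have : T ≤ 4 * ε * k := by
          have := (div_le_iff₀ (by positivity)).1 hkT
          linarith
        nlinarith
      have hD : stmt2f y - stmt2f x ≤ (y - x) * (ε ^ 2 / 4) :=
        stmt2f_upper hxy (fun u hu => stmt2g_small hε0 hcε hu)
      have := H1 (Real.exp x) (Real.exp y) (Real.exp_pos x) (Real.exp_le_exp.2 hxy)
      rw [← Real.exp_log hM0, Real.rpow_def_of_pos (Real.exp_pos x),
        Real.rpow_def_of_pos (Real.exp_pos y), Real.log_exp, Real.log_exp,
        ← Real.exp_add, ← Real.exp_add, ← Real.exp_add] at this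
      simp only [Real.log_exp] at this
      have hkey : x * s + α * stmt2f x ≤ Real.log M + (y * s + α * stmt2f y) :=
        Real.exp_le_exp.1 this
      -- derive contradiction
      have hL0 : 0 ≤ y - x := by linarith
      have hαD : α * (stmt2f y - stmt2f x) ≤ (-s / 2) * (y - x) := by nlinarith
      have h2s : (-s / 2) * (2 / -s) = 1 := by
        rw [div_mul_div_comm, mul_comm]
        exact div_self (by nlinarith)
      have hT : (-s / 2) * T = Real.log M + 1 := by
        rw [hTdef, mul_comm (Real.log M + 1), ← mul_assoc, h2s, one_mul]
      nlinarith [mul_le_mul_of_nonneg_left hTL (by linarith : (0:ℝ) ≤ -s / 2)]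
    · -- use H2 on a near-slope-1 interval
      set ε : ℝ := min 1 (Real.sqrt (2 * (α - β) / α)) with hεdef
      have hε0 : 0 < ε := lt_min one_pos (Real.sqrt_pos.2 (div_pos (by linarith) hα))
      have hε1 : ε ≤ 1 := min_le_left _ _
      have hε2 : α * ε ^ 2 ≤ 2 * (α - β) := by
        have h1 : ε ^ 2 ≤ Real.sqrt (2 * (α - β) / α) ^ 2 := by
          apply pow_le_pow_left₀ hε0.le (min_le_right _ _)
        rw [Real.sq_sqrt (le_of_lt (div_pos (by linarith) hα))] at h1
        calc α * ε ^ 2 ≤ α * (2 * (α - β) / α) := by nlinarith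
          _ = 2 * (α - β) := by rw [mul_comm, div_mul_cancel₀ _ (ne_of_gt hα)]
      set T : ℝ := (Real.log M + 1) * (2 / (α - β)) with hTdef
      obtain ⟨k, hk⟩ := exists_nat_ge (max 1 (T / (4 * ε)))
      have hk1 : (1:ℝ) ≤ k := le_trans (le_max_left _ _) hk
      have hkT : T / (4 * ε) ≤ k := le_trans (le_max_right _ _) hk
      have hπ : (3.14 : ℝ) < Real.pi := by
        have := Real.pi_gt_d6; linarith
      set c : ℝ := 2 * Real.pi * k + Real.pi / 2 with hcdef
      have hπk : 2 * Real.pi * 1 ≤ 2 * Real.pi * k := by nlinarith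
      have hcε : ε ≤ c := by rw [hcdef]; nlinarith
      set x : ℝ := (c - ε) ^ 2 with hxdef
      set y : ℝ := (c + ε) ^ 2 with hydef
      have hxy : x ≤ y := by nlinarith
      have hL : y - x = 4 * c * ε := by rw [hxdef, hydef]; ring
      have hTL : T ≤ y - x := by
        rw [hL]
        have hck : (k:ℝ) ≤ c := by rw [hcdef]; nlinarith [mul_le_mul_of_nonneg_right (by linarith : (1:ℝ) ≤ 2 * Real.pi - 1) (by linarith : (0:ℝ) ≤ (k:ℝ) - 1)]
        have : T ≤ 4 * ε * k := by
          have := (div_le_iff₀ (by positivity)).1 hkT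
          linarith
        nlinarith
      have hD : (y - x) * (1 - ε ^ 2 / 4) ≤ stmt2f y - stmt2f x :=
        stmt2f_lower hxy (fun u hu => stmt2g_large hε0 hcε hu)
      have := H2 (Real.exp x) (Real.exp y) (Real.exp_pos x) (Real.exp_le_exp.2 hxy)
      rw [← Real.exp_log hM0, Real.rpow_def_of_pos (Real.exp_pos x),
        Real.rpow_def_of_pos (Real.exp_pos y), Real.rpow_def_of_pos (Real.exp_pos x),
        Real.rpow_def_of_pos (Real.exp_pos y), Real.log_exp, Real.log_exp,
        ← Real.exp_add, ← Real.exp_add, ← Real.exp_add, ← Real.exp_add,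
        ← Real.exp_add] at this
      simp only [Real.log_exp] at this
      have hkey : y * (-β) + (y * s + α * stmt2f y)
          ≤ Real.log M + (x * (-β) + (x * s + α * stmt2f x)) := Real.exp_le_exp.1 this
      have hL0 : 0 ≤ y - x := by linarith
      have hαD : (α - (α - β) / 2) * (y - x) ≤ α * (stmt2f y - stmt2f x) := by nlinarith
      have h2s : ((α - β) / 2) * (2 / (α - β)) = 1 := by
        rw [div_mul_div_comm, mul_comm]
        exact div_self (by nlinarith)
      have hT : ((α - β) / 2) * T = Real.log M + 1 := by
        rw [hTdef, mul_comm (Real.log M + 1), ← mul_assoc, h2s, one_mul]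
      nlinarith [mul_le_mul_of_nonneg_left hTL (by linarith : (0:ℝ) ≤ (α - β) / 2),
        mul_le_mul_of_nonneg_right hs hL0]
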